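/- arXiv:2403.17338 — 3 statements merged into one kernel-verified Lean document; each statement's English description precedes it below -/
import Mathlib

section
/- Let ζ₀, ζ₁ : ℝ → ℝ be differentiable with ζ₁(t) = ζ₀'(t) + γ₁·ζ₀(t), and suppose ζ₁'(t) + γ₂·ζ₁(t) ≥ 0 for all t ≥ 0 with γ₁, γ₂ > 0. If ζ₀(0) ≥ 0 and ζ₁(0) ≥ 0, then ζ₀(t) ≥ 0 and ζ₁(t) ≥ 0 for all t ≥ 0. -/
/-!
Both claims are the same first-order comparison principle: if `f' + γ f ≥ 0` on `[a, ∞)` then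
`t ↦ exp (γ t) f t` has nonnegative derivative there, hence is monotone, so `f a ≥ 0` propagates
forward. Applied to `ζ₁` this gives `ζ₁ ≥ 0`; since `ζ₀' + γ₁ ζ₀ = ζ₁ ≥ 0`, applying it again to
`ζ₀` gives `ζ₀ ≥ 0`.
-/

open Real Set

theorem hasDerivAt_exp_mul_mul {f : ℝ → ℝ} {f' γ t : ℝ} (hf : HasDerivAt f f' t) :
    HasDerivAt (fun s => exp (γ * s) * f s) (exp (γ * t) * (f' + γ * f t)) t := by
  have hexp : HasDerivAt (fun s => exp (γ * s)) (exp (γ * t) * γ) t := by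
    simpa using ((hasDerivAt_id t).const_mul γ).exp
  exact (hexp.mul hf).congr_deriv (by ring)

theorem monotoneOn_exp_mul_mul_of_deriv_add_mul_nonneg {f : ℝ → ℝ} {γ a : ℝ}
    (hf : Differentiable ℝ f) (h : ∀ t, a ≤ t → 0 ≤ deriv f t + γ * f t) :
    MonotoneOn (fun s => exp (γ * s) * f s) (Ici a) := by
  have hderiv : ∀ t, HasDerivAt (fun s => exp (γ * s) * f s)
      (exp (γ * t) * (deriv f t + γ * f t)) t :=
    fun t => hasDerivAt_exp_mul_mul (hf t).hasDerivAt
  have hdiff : Differentiable ℝ (fun s => exp (γ * s) * f s) :=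
    fun t => (hderiv t).differentiableAt
  refine monotoneOn_of_deriv_nonneg (convex_Ici a) hdiff.continuous.continuousOn
    hdiff.differentiableOn fun t ht => ?_
  rw [interior_Ici] at ht
  rw [(hderiv t).deriv]
  exact mul_nonneg (exp_pos _).le (h t ht.le)

theorem nonneg_of_deriv_add_mul_nonneg {f : ℝ → ℝ} {γ a : ℝ}
    (hf : Differentiable ℝ f) (h : ∀ t, a ≤ t → 0 ≤ deriv f t + γ * f t) (ha : 0 ≤ f a)
    {t : ℝ} (ht : a ≤ t) : 0 ≤ f t := by
  have hmono := monotoneOn_exp_mul_mul_of_deriv_add_mul_nonneg hf h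
    self_mem_Ici (mem_Ici.mpr ht) ht
  have : 0 ≤ exp (γ * t) * f t := (mul_nonneg (exp_pos _).le ha).trans hmono
  exact nonneg_of_mul_nonneg_right this (exp_pos _)

theorem hocbf_forward_invariance_general (ζ₀ ζ₁ : ℝ → ℝ) (γ₁ γ₂ : ℝ)
    (h0d : Differentiable ℝ ζ₀) (h1d : Differentiable ℝ ζ₁)
    (hdef : ∀ t : ℝ, ζ₁ t = deriv ζ₀ t + γ₁ * ζ₀ t)
    (hineq : ∀ t : ℝ, 0 ≤ t → deriv ζ₁ t + γ₂ * ζ₁ t ≥ 0)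
    (h00 : ζ₀ 0 ≥ 0) (h10 : ζ₁ 0 ≥ 0) :
    ∀ t : ℝ, 0 ≤ t → ζ₀ t ≥ 0 ∧ ζ₁ t ≥ 0 := by
  have hζ₁ : ∀ t, 0 ≤ t → 0 ≤ ζ₁ t := fun t ht =>
    nonneg_of_deriv_add_mul_nonneg h1d hineq h10 ht
  have hζ₀ : ∀ t, 0 ≤ t → 0 ≤ ζ₀ t := fun t ht =>
    nonneg_of_deriv_add_mul_nonneg h0d (fun s hs => hdef s ▸ hζ₁ s hs) h00 ht
  exact fun t ht => ⟨hζ₀ t ht, hζ₁ t ht⟩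

/-- Forward invariance for a relative-degree-2 HOCBF with linear class K
functions `α₁ s = γ₁ s` and `α₂ s = γ₂ s`. -/
theorem hocbf_forward_invariance (ζ₀ ζ₁ : ℝ → ℝ) (γ₁ γ₂ : ℝ)
    (h0d : Differentiable ℝ ζ₀) (h1d : Differentiable ℝ ζ₁)
    (hγ₁ : 0 < γ₁) (hγ₂ : 0 < γ₂)
    (hdef : ∀ t : ℝ, ζ₁ t = deriv ζ₀ t + γ₁ * ζ₀ t)
    (hineq : ∀ t : ℝ, 0 ≤ t → deriv ζ₁ t + γ₂ * ζ₁ t ≥ 0)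
    (h00 : ζ₀ 0 ≥ 0) (h10 : ζ₁ 0 ≥ 0) :
    ∀ t : ℝ, 0 ≤ t → ζ₀ t ≥ 0 ∧ ζ₁ t ≥ 0 :=
  hocbf_forward_invariance_general ζ₀ ζ₁ γ₁ γ₂ h0d h1d hdef hineq h00 h10
end

section
/- Suppose b : ℝ → ℝ is differentiable, b(0) > 0, and b'(t) ≥ -α(b(t)) whenever b(t) ≥ 0, where α is a locally Lipschitz class K function. Then b(t) ≥ 0 for all t ≥ 0 in the domain of definition. -/
/-! Near `0` the Lipschitz bound gives `α x ≤ K x`, so just before the first time `t₁` at which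
`b` stops being positive we have `b' ≥ -K b`. Hence `b t * exp (K t)` is nondecreasing there,
which is impossible since it is positive before `t₁` and nonpositive at `t₁`. -/

open Set Filter Topology Real

theorem LocallyLipschitzOn.exists_eventually_dist_le_mul {X Y : Type*} [PseudoMetricSpace X]
    [PseudoMetricSpace Y] {s : Set X} {f : X → Y} (hf : LocallyLipschitzOn s f) {a : X}
    (ha : a ∈ s) : ∃ K : NNReal, ∀ᶠ x in 𝓝[s] a, dist (f x) (f a) ≤ K * dist x a := by
  obtain ⟨K, t, ht, hK⟩ := hf ha
  exact ⟨K, eventually_of_mem ht fun x hx ↦ hK.dist_le_mul x hx a (mem_of_mem_nhdsWithin ha ht)⟩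

theorem LocallyLipschitzOn.exists_le_mul_of_map_zero {f : ℝ → ℝ}
    (hf : LocallyLipschitzOn (Ici 0) f) (hf0 : f 0 = 0) :
    ∃ K δ : ℝ, 0 < δ ∧ ∀ x ∈ Icc 0 δ, f x ≤ K * x := by
  obtain ⟨K, hK⟩ := hf.exists_eventually_dist_le_mul self_mem_Ici
  obtain ⟨δ, hδ, hsub⟩ := mem_nhdsGE_iff_exists_Icc_subset.mp hK
  refine ⟨K, δ, hδ, fun x hx ↦ ?_⟩
  have hfx : |f x| ≤ K * |x| := by simpa [hf0] using hsub hx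
  rw [abs_of_nonneg hx.1] at hfx
  exact (le_abs_self _).trans hfx

theorem exists_first_nonpos {f : ℝ → ℝ} (hf : Continuous f) {a T : ℝ} (ha : 0 < f a)
    (haT : a ≤ T) (hT : f T ≤ 0) : ∃ t₁, a < t₁ ∧ f t₁ ≤ 0 ∧ ∀ t ∈ Ico a t₁, 0 < f t := by
  have hZ : IsCompact (Icc a T ∩ {t | f t ≤ 0}) :=
    isCompact_Icc.inter_right (isClosed_le hf continuous_const)
  obtain ⟨t₁, ⟨⟨hat₁, ht₁T⟩, hft₁⟩, hmin⟩ := hZ.exists_isLeast ⟨T, ⟨haT, le_rfl⟩, hT⟩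
  refine ⟨t₁, hat₁.lt_of_ne ?_, hft₁, fun t ⟨hat, htt₁⟩ ↦ ?_⟩
  · rintro rfl
    exact hft₁.not_gt ha
  · by_contra! hft
    exact htt₁.not_ge (hmin ⟨⟨hat, htt₁.le.trans ht₁T⟩, hft⟩)

theorem monotoneOn_mul_exp_of_neg_mul_le_deriv {D : Set ℝ} (hD : Convex ℝ D) {f : ℝ → ℝ}
    (hf : ContinuousOn f D) (hf' : DifferentiableOn ℝ f (interior D)) (K : ℝ)
    (h : ∀ x ∈ interior D, -(K * f x) ≤ deriv f x) :
    MonotoneOn (fun t ↦ f t * exp (K * t)) D := by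
  refine monotoneOn_of_deriv_nonneg hD (by fun_prop) (by fun_prop) fun x hx ↦ ?_
  have hfx : HasDerivAt f (deriv f x) x :=
    (hf'.differentiableAt (isOpen_interior.mem_nhds hx)).hasDerivAt
  have hexp : HasDerivAt (fun t ↦ exp (K * t)) (exp (K * x) * K) x := by
    simpa using ((hasDerivAt_id x).const_mul K).exp
  rw [(hfx.fun_mul hexp).deriv]
  have hfK := h x hx
  nlinarith [exp_pos (K * x)]

theorem cbf_forward_invariance_classK_general (b α : ℝ → ℝ)
    (hb : Differentiable ℝ b) (hb0 : 0 < b 0)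
    (hαlip : LocallyLipschitzOn (Set.Ici 0) α)
    (hα0 : α 0 = 0)
    (hineq : ∀ t : ℝ, 0 ≤ t → b t ≥ 0 → deriv b t ≥ -α (b t)) :
    ∀ t : ℝ, 0 ≤ t → b t ≥ 0 := by
  intro T hT
  by_contra! hbT
  obtain ⟨K, δ, hδ, hαK⟩ := hαlip.exists_le_mul_of_map_zero hα0
  obtain ⟨t₁, ht₁, hbt₁, hpos⟩ := exists_first_nonpos hb.continuous hb0 hT hbT.le
  obtain ⟨s, hst₁, hs⟩ : ∃ s < t₁, Icc s t₁ ⊆ {t | 0 ≤ t ∧ b t ≤ δ} :=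
    mem_nhdsLE_iff_exists_Icc_subset.mp <| nhdsWithin_le_nhds <|
      (lt_mem_nhds ht₁).mono (fun _ ↦ le_of_lt) |>.and <|
        hb.continuous.continuousAt.eventually (ge_mem_nhds (hbt₁.trans_lt hδ))
  have hmono := monotoneOn_mul_exp_of_neg_mul_le_deriv (convex_Icc s t₁)
    hb.continuous.continuousOn hb.differentiableOn K fun t ht ↦ by
      rw [interior_Icc] at ht
      obtain ⟨ht0, hbδ⟩ := hs (Ioo_subset_Icc_self ht)
      have hbt := hpos t ⟨ht0, ht.2⟩
      linarith [hineq t ht0 hbt.le, hαK (b t) ⟨hbt.le, hbδ⟩]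
  have hgrow := hmono (left_mem_Icc.mpr hst₁.le) (right_mem_Icc.mpr hst₁.le) hst₁.le
  have hbs := hpos s ⟨(hs (left_mem_Icc.mpr hst₁.le)).1, hst₁⟩
  exact (mul_pos hbs (exp_pos _)).not_ge
    (hgrow.trans (mul_nonpos_of_nonpos_of_nonneg hbt₁ (exp_pos _).le))

/-- Forward invariance of the zero-superlevel set of a barrier function
under a general locally Lipschitz class K function `α`. -/
theorem cbf_forward_invariance_classK (b α : ℝ → ℝ)
    (hb : Differentiable ℝ b) (hb0 : 0 < b 0)
    (hαlip : LocallyLipschitzOn (Set.Ici 0) α)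
    (hαc : ContinuousOn α (Set.Ici 0)) (hαm : StrictMonoOn α (Set.Ici 0))
    (hα0 : α 0 = 0) (hαmap : Set.MapsTo α (Set.Ici 0) (Set.Ici 0))
    (hineq : ∀ t : ℝ, 0 ≤ t → b t ≥ 0 → deriv b t ≥ -α (b t)) :
    ∀ t : ℝ, 0 ≤ t → b t ≥ 0 :=
  cbf_forward_invariance_classK_general b α hb hb0 hαlip hα0 hineq
end

section
/- Let b(t) = (x(t) - x_c)² + (y(t) - y_c)² - r² where (x(t), y(t)) is continuously differentiable with speed bounded by v_max, and b(0) ≥ ε > 0. Then b(t) ≥ 0 for all t ∈ [0, T] where T = (√(r² + ε) - r)/v_max. -/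
private lemma cs_aux (u v a b : ℝ) :
    u * a + v * b ≤ Real.sqrt (u ^ 2 + v ^ 2) * Real.sqrt (a ^ 2 + b ^ 2) := by
  have h3 : (u * a + v * b) ^ 2 ≤ (u ^ 2 + v ^ 2) * (a ^ 2 + b ^ 2) := by
    nlinarith [sq_nonneg (u * b - v * a)]
  calc u * a + v * b ≤ |u * a + v * b| := le_abs_self _
    _ = Real.sqrt ((u * a + v * b) ^ 2) := (Real.sqrt_sq_eq_abs _).symm
    _ ≤ Real.sqrt ((u ^ 2 + v ^ 2) * (a ^ 2 + b ^ 2)) := Real.sqrt_le_sqrt h3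
    _ = Real.sqrt (u ^ 2 + v ^ 2) * Real.sqrt (a ^ 2 + b ^ 2) :=
        Real.sqrt_mul (by positivity) _

private lemma tri_aux (a b c d : ℝ) :
    Real.sqrt ((a + c) ^ 2 + (b + d) ^ 2) ≤
      Real.sqrt (a ^ 2 + b ^ 2) + Real.sqrt (c ^ 2 + d ^ 2) := by
  set S1 := Real.sqrt (a ^ 2 + b ^ 2) with hS1
  set S2 := Real.sqrt (c ^ 2 + d ^ 2) with hS2
  have hS1n : 0 ≤ S1 := Real.sqrt_nonneg _
  have hS2n : 0 ≤ S2 := Real.sqrt_nonneg _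
  have hS1sq : S1 ^ 2 = a ^ 2 + b ^ 2 := Real.sq_sqrt (by positivity)
  have hS2sq : S2 ^ 2 = c ^ 2 + d ^ 2 := Real.sq_sqrt (by positivity)
  have hcs : a * c + b * d ≤ S1 * S2 := cs_aux a b c d
  have key : (a + c) ^ 2 + (b + d) ^ 2 ≤ (S1 + S2) ^ 2 := by nlinarith
  calc Real.sqrt ((a + c) ^ 2 + (b + d) ^ 2)
      ≤ Real.sqrt ((S1 + S2) ^ 2) := Real.sqrt_le_sqrt key
    _ = |S1 + S2| := Real.sqrt_sq_eq_abs _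
    _ = S1 + S2 := abs_of_nonneg (by linarith)

/-- Quantitative minimum dwell time in the safe set of the circular
road-boundary barrier: if `b 0 ≥ ε > 0` and the planar speed is bounded by
`v_max`, then `b t ≥ 0` for all `t ∈ [0, T]` with
`T = (√(r² + ε) - r) / v_max`. -/
theorem circular_barrier_dwell_time (x y : ℝ → ℝ) (x' y' : ℝ → ℝ)
    (xc yc r ε vmax : ℝ)
    (hr : 0 < r) (hε : 0 < ε) (hvmax : 0 < vmax)
    (hx : ∀ t, HasDerivAt x (x' t) t) (hy : ∀ t, HasDerivAt y (y' t) t)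
    (hx' : Continuous x') (hy' : Continuous y')
    (hspeed : ∀ t, Real.sqrt ((x' t) ^ 2 + (y' t) ^ 2) ≤ vmax)
    (h0 : (x 0 - xc) ^ 2 + (y 0 - yc) ^ 2 - r ^ 2 ≥ ε) :
    ∀ t ∈ Set.Icc (0 : ℝ) ((Real.sqrt (r ^ 2 + ε) - r) / vmax),
      (x t - xc) ^ 2 + (y t - yc) ^ 2 - r ^ 2 ≥ 0 := by
  have hxc : Continuous x := continuous_iff_continuousAt.2 fun s => (hx s).continuousAt
  have hyc : Continuous y := continuous_iff_continuousAt.2 fun s => (hy s).continuousAt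
  -- displacement bound
  have hdisp : ∀ t, 0 ≤ t →
      Real.sqrt ((x t - x 0) ^ 2 + (y t - y 0) ^ 2) ≤ vmax * t := by
    intro t ht
    rcases eq_or_lt_of_le ht with h | h
    · simp [← h]
    · set u := x t - x 0 with hu
      set v := y t - y 0 with hv
      set D := Real.sqrt (u ^ 2 + v ^ 2) with hD
      have hDn : 0 ≤ D := Real.sqrt_nonneg _
      have hDsq : D ^ 2 = u ^ 2 + v ^ 2 := Real.sq_sqrt (by positivity)
      have hg : ∀ s, HasDerivAt (fun s => u * x s + v * y s)
          (u * x' s + v * y' s) s := fun s => ((hx s).const_mul u).add ((hy s).const_mul v)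
      obtain ⟨c, _, hceq⟩ := exists_hasDerivAt_eq_slope
        (fun s => u * x s + v * y s) (fun s => u * x' s + v * y' s) h
        ((((continuous_const.mul hxc)).add ((continuous_const.mul hyc))).continuousOn)
        (fun s _ => hg s)
      have hslope : u * x' c + v * y' c = (u ^ 2 + v ^ 2) / t := by
        rw [hceq]; field_simp; ring
      have hcs : u * x' c + v * y' c ≤ D * vmax := by
        calc u * x' c + v * y' c
            ≤ D * Real.sqrt ((x' c) ^ 2 + (y' c) ^ 2) := cs_aux u v (x' c) (y' c)
          _ ≤ D * vmax := by
              exact mul_le_mul_of_nonneg_left (hspeed c) hDn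
      have hkey : u ^ 2 + v ^ 2 ≤ D * vmax * t := by
        have := hslope
        have h1 : (u ^ 2 + v ^ 2) / t ≤ D * vmax := this ▸ hcs
        calc u ^ 2 + v ^ 2 = (u ^ 2 + v ^ 2) / t * t := by field_simp
          _ ≤ D * vmax * t := by
              exact mul_le_mul_of_nonneg_right h1 (le_of_lt h)
      -- D^2 ≤ D * (vmax * t), conclude D ≤ vmax * t
      rcases eq_or_lt_of_le hDn with hD0 | hD0
      · rw [← hD0]; positivity
      · nlinarith [hDsq]
  intro t ⟨ht0, htT⟩
  set S := Real.sqrt (r ^ 2 + ε) with hSdef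
  have hSr : r < S := by
    have : Real.sqrt (r ^ 2) < Real.sqrt (r ^ 2 + ε) :=
      Real.sqrt_lt_sqrt (sq_nonneg r) (by linarith)
    rwa [Real.sqrt_sq hr.le] at this
  have hvt : vmax * t ≤ S - r := by
    have := (le_div_iff₀ hvmax).1 htT
    linarith
  have hA : S ≤ Real.sqrt ((x 0 - xc) ^ 2 + (y 0 - yc) ^ 2) :=
    Real.sqrt_le_sqrt (by linarith)
  have hD := hdisp t ht0
  have htri := tri_aux (x t - xc) (y t - yc) (x 0 - x t) (y 0 - y t)
  have e1 : (x t - xc + (x 0 - x t)) ^ 2 + (y t - yc + (y 0 - y t)) ^ 2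
      = (x 0 - xc) ^ 2 + (y 0 - yc) ^ 2 := by ring
  have e2 : (x 0 - x t) ^ 2 + (y 0 - y t) ^ 2
      = (x t - x 0) ^ 2 + (y t - y 0) ^ 2 := by ring
  rw [e1, e2] at htri
  have hr' : r ≤ Real.sqrt ((x t - xc) ^ 2 + (y t - yc) ^ 2) := by linarith
  have hsq : (Real.sqrt ((x t - xc) ^ 2 + (y t - yc) ^ 2)) ^ 2
      = (x t - xc) ^ 2 + (y t - yc) ^ 2 := Real.sq_sqrt (by positivity)
  nlinarith [hr', hsq]
end
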